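/- Let φ ∈ L^∞(𝕋) with Fourier series ∑_{n∈ℤ} aₙ zⁿ and λ ∈ 𝕋. If the Toeplitz operator T_φ is C_λ-symmetric, then the Fourier coefficients satisfy a_{−n} = λⁿ aₙ for all n ≥ 1; equivalently φ(λ z) = φ(conj(z)) a.e. on 𝕋. -/

import Mathlib

open MeasureTheory Complex Real AddCircle
open scoped ComplexConjugate

noncomputable section

instance fact2pi : Fact (0 < 2 * π) := ⟨by positivity⟩

/-- Normalized Haar measure on the circle. -/
abbrev μH : Measure (AddCircle (2 * π)) := AddCircle.haarAddCircle

/-- The Hardy space `H²`, realized as the closed span of the nonnegative Fourier modes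
inside `L²(𝕋)`. -/
def HardyH2 : Submodule ℂ (Lp ℂ 2 μH) :=
  (Submodule.span ℂ (Set.range fun n : ℕ => fourierLp 2 (n : ℤ))).topologicalClosure

instance : CompleteSpace HardyH2 :=
  (Submodule.isClosed_topologicalClosure _).completeSpace_coe

/-- The Szegő (orthogonal) projection `P : L²(𝕋) → H²`. -/
def szego : Lp ℂ 2 μH →L[ℂ] HardyH2 := Submodule.orthogonalProjectionOnto HardyH2

/-- The Toeplitz operator `T_φ f = P(φ f)` with symbol `φ`. -/
def toeplitz (φ : AddCircle (2 * π) → ℂ)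
    (hφ : ∀ f : Lp ℂ 2 μH, MemLp (fun x => φ x * f x) 2 μH) (g : HardyH2) : HardyH2 :=
  szego ((hφ (g : Lp ℂ 2 μH)).toLp _)

/-- The Möbius transformation `φ_a`. -/
def moebius (a z : ℂ) : ℂ := (a - z) / (1 - conj a * z)

/-!
Test the symmetry relation `⟨C T_φ C g, h⟩ = ⟨g, T_φ h⟩` on `g = eₙ`, `h = e₀`. The right side
is `⟨eₙ, P(φ)⟩ = aₙ`. On the left, `C eₙ = conj(λⁿ) eₙ`, so `T_φ C eₙ` has zeroth coefficient
`conj(λⁿ) a₋ₙ`; and pairing `C u` with `e₀` returns the mean of `u`, because `x ↦ c - x` preserves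
Haar measure. Hence `conj(λⁿ) a₋ₙ = aₙ`, and `|λ| = 1`.
-/

section FourierCoefficients

variable {T : ℝ}

lemma conj_fourier_sub (m : ℤ) (c x : AddCircle T) :
    conj (fourier m (c - x)) = conj (fourier m c) * fourier m x := by
  rw [← fourier_neg, ← fourier_neg, fourier_apply, fourier_apply, fourier_apply, sub_eq_add_neg,
    smul_add, neg_smul_neg, toCircle_add, Circle.coe_mul]

variable [Fact (0 < T)]

lemma inner_fourierLp_eq_fourierCoeff (k : ℤ) (f : Lp ℂ 2 (haarAddCircle (T := T))) :
    inner ℂ (fourierLp 2 k) f = fourierCoeff f k := by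
  rw [← fourierBasis_repr, ← coe_fourierBasis, HilbertBasis.repr_apply_apply]

lemma fourierCoeff_mul_fourier (f : AddCircle T → ℂ) (m k : ℤ) :
    fourierCoeff (fun x => f x * fourier m x) k = fourierCoeff f (k - m) := by
  refine integral_congr_ae (.of_forall fun x => ?_)
  simp only [smul_eq_mul]
  rw [show -(k - m) = -k + m by ring, fourier_add]
  ring

lemma fourierCoeff_mul_of_ae_eq_const_mul_fourier {f g : AddCircle T → ℂ} {a : ℂ} {m : ℤ}
    (hg : g =ᵐ[haarAddCircle] fun x => a * fourier m x) (k : ℤ) :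
    fourierCoeff (fun x => f x * g x) k = a * fourierCoeff f (k - m) := by
  have hfg : (fun x => f x * g x) =ᵐ[haarAddCircle] fun x => a * (f x * fourier m x) := by
    filter_upwards [hg] with x hx
    rw [hx]
    ring
  rw [fourierCoeff_congr_ae hfg, fourierCoeff.const_mul, fourierCoeff_mul_fourier]

lemma fourierCoeff_conj_comp_sub_zero (f : AddCircle T → ℂ) (c : AddCircle T) :
    fourierCoeff (fun x => conj (f (c - x))) 0 = conj (fourierCoeff f 0) := by
  simp only [fourierCoeff, neg_zero, fourier_zero, one_smul]
  rw [integral_sub_left_eq_self (fun x => conj (f x)) haarAddCircle c, integral_conj]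

end FourierCoefficients

section Reflection

variable {T : ℝ} [Fact (0 < T)] {c : AddCircle T}

lemma inner_fourierLp_zero_of_ae_eq_conj_sub {u v : Lp ℂ 2 (haarAddCircle (T := T))}
    (hv : (v : AddCircle T → ℂ) =ᵐ[haarAddCircle] fun x => conj (u (c - x))) :
    inner ℂ v (fourierLp 2 0) = fourierCoeff u 0 := by
  rw [← inner_conj_symm, inner_fourierLp_eq_fourierCoeff, fourierCoeff_congr_ae hv,
    fourierCoeff_conj_comp_sub_zero, conj_conj]

lemma ae_eq_conj_mul_fourier_of_ae_eq_conj_sub {v : Lp ℂ 2 (haarAddCircle (T := T))} {n : ℕ}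
    (hv : (v : AddCircle T → ℂ) =ᵐ[haarAddCircle]
      fun x => conj ((fourierLp 2 n : AddCircle T → ℂ) (c - x))) :
    (v : AddCircle T → ℂ) =ᵐ[haarAddCircle]
      fun x => conj ((toCircle c : ℂ) ^ n) * fourier n x := by
  have hcomp : (fun x => (fourierLp 2 (n : ℤ) : AddCircle T → ℂ) (c - x)) =ᵐ[haarAddCircle]
      fun x => fourier n (c - x) :=
    (Measure.measurePreserving_sub_left haarAddCircle c).quasiMeasurePreserving.ae_eq_comp
      (coeFn_fourierLp 2 n)
  filter_upwards [hv, hcomp] with x hvx hcompx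
  rw [hvx, hcompx, conj_fourier_sub, fourier_apply, natCast_zsmul, toCircle_nsmul,
    Circle.coe_pow]

end Reflection

lemma fourierLp_mem_hardyH2 (k : ℕ) : fourierLp 2 (k : ℤ) ∈ HardyH2 :=
  Submodule.le_topologicalClosure _ (Submodule.subset_span ⟨k, rfl⟩)

lemma fourierCoeff_toeplitz (φ : AddCircle (2 * π) → ℂ)
    (hφ : ∀ f : Lp ℂ 2 μH, MemLp (fun x => φ x * f x) 2 μH) (g : HardyH2) (k : ℕ) :
    fourierCoeff (toeplitz φ hφ g : Lp ℂ 2 μH) k =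
      fourierCoeff (fun x => φ x * (g : Lp ℂ 2 μH) x) k := by
  rw [← inner_fourierLp_eq_fourierCoeff]
  change inner ℂ (⟨fourierLp 2 k, fourierLp_mem_hardyH2 k⟩ : HardyH2)
    (Submodule.orthogonalProjectionOnto HardyH2 ((hφ g).toLp _)) = _
  rw [Submodule.inner_orthogonalProjectionOnto_eq_of_mem_left, inner_fourierLp_eq_fourierCoeff,
    fourierCoeff_congr_ae (hφ g).coeFn_toLp]

theorem stmt9_general (c : AddCircle (2 * π))
    (CL : Lp ℂ 2 μH → Lp ℂ 2 μH)
    (hCL : ∀ h : Lp ℂ 2 μH,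
      (CL h : AddCircle (2 * π) → ℂ) =ᵐ[μH] fun x => conj (h (c - x)))
    (hCLH : ∀ h : Lp ℂ 2 μH, h ∈ HardyH2 → CL h ∈ HardyH2)
    (φ : AddCircle (2 * π) → ℂ)
    (hφm : ∀ h : Lp ℂ 2 μH, MemLp (fun x => φ x * h x) 2 μH)
    (hsym : ∀ g h : HardyH2,
      (inner ℂ (CL ((toeplitz φ hφm ⟨CL (g : Lp ℂ 2 μH), hCLH _ g.2⟩ : HardyH2) : Lp ℂ 2 μH))
          ((h : HardyH2) : Lp ℂ 2 μH) : ℂ) =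
        (inner ℂ ((g : HardyH2) : Lp ℂ 2 μH)
          ((toeplitz φ hφm h : HardyH2) : Lp ℂ 2 μH) : ℂ)) :
    ∀ n : ℕ, 1 ≤ n →
      fourierCoeff φ (-(n : ℤ)) = (AddCircle.toCircle c : ℂ) ^ n * fourierCoeff φ (n : ℤ) := by
  intro n _
  set e₀ : HardyH2 := ⟨fourierLp 2 0, by simpa using fourierLp_mem_hardyH2 0⟩
  set eₙ : HardyH2 := ⟨fourierLp 2 n, fourierLp_mem_hardyH2 n⟩
  have hTCeₙ : fourierCoeff (toeplitz φ hφm ⟨CL eₙ, hCLH _ eₙ.2⟩ : Lp ℂ 2 μH) 0 =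
      conj ((toCircle c : ℂ) ^ n) * fourierCoeff φ (-n) := by
    have h := fourierCoeff_toeplitz φ hφm ⟨CL eₙ, hCLH _ eₙ.2⟩ 0
    rwa [fourierCoeff_mul_of_ae_eq_const_mul_fourier
      (ae_eq_conj_mul_fourier_of_ae_eq_conj_sub (hCL eₙ)), Nat.cast_zero, zero_sub] at h
  have hTe₀ : fourierCoeff (toeplitz φ hφm e₀ : Lp ℂ 2 μH) n = fourierCoeff φ n := by
    rw [fourierCoeff_toeplitz, fourierCoeff_mul_of_ae_eq_const_mul_fourier (a := 1) (m := 0)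
      ((coeFn_fourierLp 2 0).trans (.of_forall fun x => (one_mul _).symm)), sub_zero, one_mul]
  have hsymₙ := hsym eₙ e₀
  rw [inner_fourierLp_zero_of_ae_eq_conj_sub (hCL _), inner_fourierLp_eq_fourierCoeff, hTCeₙ,
    hTe₀] at hsymₙ
  have hunit : (toCircle c : ℂ) ^ n * conj ((toCircle c : ℂ) ^ n) = 1 := by
    rw [mul_conj, map_pow, Circle.normSq_coe, one_pow, ofReal_one]
  linear_combination (toCircle c : ℂ) ^ n * hsymₙ - fourierCoeff φ (-n) * hunit

/-- If `T_φ` is `C_λ`-symmetric with `λ = toCircle c`, then the Fourier coefficients of `φ`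
satisfy `a₋ₙ = λⁿ aₙ` for all `n ≥ 1`. -/
theorem stmt9 (c : AddCircle (2 * π))
    (CL : Lp ℂ 2 μH → Lp ℂ 2 μH)
    (hCL : ∀ h : Lp ℂ 2 μH,
      (CL h : AddCircle (2 * π) → ℂ) =ᵐ[μH] fun x => conj (h (c - x)))
    (hCLH : ∀ h : Lp ℂ 2 μH, h ∈ HardyH2 → CL h ∈ HardyH2)
    (φ : AddCircle (2 * π) → ℂ) (hφb : MemLp φ ⊤ μH)
    (hφm : ∀ h : Lp ℂ 2 μH, MemLp (fun x => φ x * h x) 2 μH)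
    (hsym : ∀ g h : HardyH2,
      (inner ℂ (CL ((toeplitz φ hφm ⟨CL (g : Lp ℂ 2 μH), hCLH _ g.2⟩ : HardyH2) : Lp ℂ 2 μH))
          ((h : HardyH2) : Lp ℂ 2 μH) : ℂ) =
        (inner ℂ ((g : HardyH2) : Lp ℂ 2 μH)
          ((toeplitz φ hφm h : HardyH2) : Lp ℂ 2 μH) : ℂ)) :
    ∀ n : ℕ, 1 ≤ n →
      fourierCoeff φ (-(n : ℤ)) = (AddCircle.toCircle c : ℂ) ^ n * fourierCoeff φ (n : ℤ) :=
  stmt9_general c CL hCL hCLH φ hφm hsym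

end
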